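/- Let μ ∈ 𝒫(O_n) with n - 2μ'_1 ≥ 0, and let T = (T_l, …, T_1, T_0) ∈ H°(μ, n). Then for each i, exactly one of T^R_{i+1}(1) < T^L_i(a_i) or T^R_{i+1}(1) > T^L_i(a_i) holds (they are never equal). Moreover, T^R_{i+1}(1) > T^L_i(a_i) implies r_i r_{i+1} = 1, and r_i r_{i+1} = 0 implies T^R_{i+1}(1) < T^L_i(a_i). -/

import Mathlib

namespace LRPaper

/-- A partition, encoded as a weakly decreasing list of positive integers. -/
def IsPartition (l : List ℕ) : Prop := l.Pairwise (· ≥ ·) ∧ ∀ x ∈ l, 0 < x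

/-- The conjugate (transposed) partition, as a list. -/
def conj (l : List ℕ) : List ℕ :=
  (List.range l.headI).map fun i => l.countP fun x => decide (i < x)

/-- The entry of a skew tableau `T` (list of rows, row `i` having the cells
`mu_i ≤ j < lam_i`) in row `i` and (absolute) column `j`. -/
def entry (mu : List ℕ) (T : List (List ℕ)) (i j : ℕ) : ℕ :=
  (T.getD i []).getD (j - mu.getD i 0) 0

/-- `T` is a semistandard tableau of skew shape `lam/mu` (entries are positive
integers, rows weakly increase, columns strictly increase). -/
def IsSkewSSYT (lam mu : List ℕ) (T : List (List ℕ)) : Prop :=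
  T.length = lam.length ∧
  (∀ i, (T.getD i []).length = lam.getD i 0 - mu.getD i 0) ∧
  (∀ r ∈ T, ∀ x ∈ r, 0 < x) ∧
  (∀ r ∈ T, r.Pairwise (· ≤ ·)) ∧
  (∀ i j, mu.getD i 0 ≤ j → mu.getD (i+1) 0 ≤ j → j < lam.getD (i+1) 0 →
    entry mu T i j < entry mu T (i+1) j)

/-- The number of occurrences of `k` among the entries of `T`. -/
def content (T : List (List ℕ)) (k : ℕ) : ℕ := T.flatten.count k

/-- `T` has content `nu` : the letter `k+1` occurs `nu_{k+1}` times. -/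
def HasContent (nu : List ℕ) (T : List (List ℕ)) : Prop :=
  ∀ k, content T (k+1) = nu.getD k 0

/-- The reverse reading word: each row right-to-left, rows top-to-bottom. -/
def rwordRev (T : List (List ℕ)) : List ℕ := (T.map List.reverse).flatten

/-- The column reading word `w(T)` : columns right-to-left, and from top to
bottom within each column. -/
def colWord (lam mu : List ℕ) (T : List (List ℕ)) : List ℕ :=
  ((List.range lam.headI).reverse.map fun c =>
    (List.range T.length).filterMap fun i =>
      if mu.getD i 0 ≤ c ∧ c < lam.getD i 0 then some (entry mu T i c) else none).flatten

/-- A lattice word: in every prefix, `i` occurs at least as often as `i+1`. -/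
def IsLattice (w : List ℕ) : Prop :=
  ∀ k i, (w.take k).count (i+2) ≤ (w.take k).count (i+1)

/-- An anti-lattice word (for letters bounded by `ℓ`): in every suffix, `i`
occurs at least as often as `i-1`, for `1 < i ≤ ℓ`. -/
def IsAntiLattice (w : List ℕ) (ℓ : ℕ) : Prop :=
  ∀ k i, i + 2 ≤ ℓ → (w.drop k).count (i+1) ≤ (w.drop k).count (i+2)

/-- A Littlewood–Richardson tableau of shape `lam/mu` and content `nu`. -/
def IsLR (lam mu nu : List ℕ) (T : List (List ℕ)) : Prop :=
  IsSkewSSYT lam mu T ∧ HasContent nu T ∧ IsLattice (rwordRev T)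

/-- A Littlewood–Richardson tableau of shape `lam/mu` with content `nu^π`
(the 180° rotation of `nu`): the column reading word is an anti-lattice word
and the letter `i` occurs `nu_{ℓ(nu)+1-i}` times. -/
def IsAntiLR (lam mu nu : List ℕ) (T : List (List ℕ)) : Prop :=
  IsSkewSSYT lam mu T ∧ HasContent nu.reverse T ∧
    IsAntiLattice (colWord lam mu T) nu.length

/-- Column insertion of `x` into a single column (top-to-bottom list): `x`
replaces the topmost entry `≥ x` (which is bumped to the next column), or is
appended at the bottom. -/
def colInsertCol (x : ℕ) : List ℕ → List ℕ × Option ℕ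
  | [] => ([x], none)
  | y :: ys =>
    if x ≤ y then (x :: ys, some y)
    else
      let p := colInsertCol x ys
      (y :: p.1, p.2)

/-- Column insertion of a letter into a tableau presented as its list of
columns (left to right). -/
def colInsert (x : ℕ) : List (List ℕ) → List (List ℕ)
  | [] => [[x]]
  | C :: rest =>
    match colInsertCol x C with
    | (C', none) => C' :: rest
    | (C', some y) => C' :: colInsert y rest

/-- Column insertion of a word (left to right) into a tableau given by its
columns. -/
def insertWord (w : List ℕ) (C : List (List ℕ)) : List (List ℕ) :=
  w.foldl (fun acc x => colInsert x acc) C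

/-- The columns of the superstandard tableau `H_mu` of shape `mu`: the `i`-th
entry from the top of each column is `i`. -/
def Hcols (mu : List ℕ) : List (List ℕ) :=
  (List.range mu.headI).map fun c => (List.range ((conj mu).getD c 0)).map (· + 1)

/-- The outer shape of the rotated diagram `mu^π` (a rectangle of width `mu_1`). -/
def piOuter (mu : List ℕ) : List ℕ := List.replicate mu.length mu.headI

/-- The inner shape of the rotated diagram `mu^π`. -/
def piInner (mu : List ℕ) : List ℕ :=
  (List.range mu.length).map fun i => mu.headI - mu.getD (mu.length - 1 - i) 0

/-- `S` is (the companion tableau of) an LR tableau in `LR^{lam'}_{delta' mu'}`: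
a semistandard tableau of straight shape `mu'` whose column insertion into
`H_{delta'}` yields `H_{lam'}`. -/
def IsCompanion (lam delta mu : List ℕ) (S : List (List ℕ)) : Prop :=
  IsSkewSSYT (conj mu) [] S ∧
    insertWord (colWord (conj mu) [] S) (Hcols (conj delta)) = Hcols (conj lam)

/-- `U` is (the companion tableau of) an LR tableau in `LR^{lam}_{delta mu^π}`:
a semistandard tableau of shape `mu^π` whose column insertion into `H_delta`
yields `H_lam`. -/
def IsCompanionAnti (lam delta mu : List ℕ) (U : List (List ℕ)) : Prop :=
  IsSkewSSYT (piOuter mu) (piInner mu) U ∧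
    insertWord (colWord (piOuter mu) (piInner mu) U) (Hcols delta) = Hcols lam


/-- The `i`-th entry (1-based) of a column, counted from the bottom. -/
def ent (U : List ℕ) (i : ℕ) : ℕ := U.getD (U.length - i) 0

/-- A two-column filling of the skew shape `λ(a,b,c) = (2^{b+c},1^a)/(1^b)`:
`L` is the left column (read top to bottom, of length `a+c`) and `R` is the
right column (of length `b+c`); the two columns overlap in `c` rows and the
bottom `a` entries of `L` form the tail. -/
structure TwoCol where
  a : ℕ
  b : ℕ
  c : ℕ
  L : List ℕ
  R : List ℕ

instance : Inhabited TwoCol := ⟨⟨0, 0, 0, [], []⟩⟩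

/-- Sliding the right column down by `k` positions produces a filling of
`λ(a-k,b-k,c+k)`; `SlideOK T k` says that this filling has weakly increasing
rows (the columns being unchanged). -/
def SlideOK (T : TwoCol) (k : ℕ) : Prop :=
  ∀ i < T.c + k, T.L.getD i 0 ≤ T.R.getD (T.b - k + i) 0

instance (T : TwoCol) : DecidablePred (SlideOK T) := by
  unfold SlideOK; infer_instance

/-- `T` is a semistandard filling of the two-column shape `λ(a,b,c)` with
entries in `ℕ_{>0}`. -/
def TC.Valid (T : TwoCol) : Prop :=
  T.L.length = T.a + T.c ∧ T.R.length = T.b + T.c ∧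
  T.L.Chain' (· < ·) ∧ T.R.Chain' (· < ·) ∧
  (∀ x ∈ T.L, 0 < x) ∧ (∀ x ∈ T.R, 0 < x) ∧ SlideOK T 0

/-- `𝔯_T`: the maximal `k ≤ min{a,b}` such that sliding the right column down
by `k` positions yields a semistandard filling. -/
def resid (T : TwoCol) : ℕ :=
  Nat.findGreatest (fun k => SlideOK T k) (min T.a T.b)

/-- The column reading word `w(T)` of a two-column tableau (right column
first, each read top to bottom). -/
def TC.word (T : TwoCol) : List ℕ := T.R ++ T.L

/-- Knuth equivalence of words, via equality of the column-insertion
tableaux. -/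
def KnuthEq (v w : List ℕ) : Prop := insertWord v [] = insertWord w []

/-- The representative of the filling with `𝔯 = 0` (right column slid down by
`𝔯_T` positions). -/
def TC.norm (T : TwoCol) : TwoCol :=
  ⟨T.a - resid T, T.b - resid T, T.c + resid T, T.L, T.R⟩

/-- The jeu de taquin operator `ℰ` of Definition 2.2: after sliding to the
representative with `𝔯 = 0`, slide into the position below the bottom of the
right column, obtaining a semistandard filling of `λ(a-1,b+1,c)`.  (The result
is characterized among semistandard fillings of the target shape by Knuth
equivalence of column reading words.) -/
noncomputable def Eop (T : TwoCol) : TwoCol :=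
  Classical.epsilon fun S =>
    S.a = (TC.norm T).a - 1 ∧ S.b = (TC.norm T).b + 1 ∧ S.c = (TC.norm T).c ∧
    TC.Valid S ∧ KnuthEq (TC.word S) (TC.word T)

/-- The jeu de taquin operator `ℱ` of Definition 2.2: after sliding to the
representative with `𝔯 = 0`, slide into the position above the top of the left
column, obtaining a semistandard filling of `λ(a+1,b-1,c)`. -/
noncomputable def Fop (T : TwoCol) : TwoCol :=
  Classical.epsilon fun S =>
    S.a = (TC.norm T).a + 1 ∧ S.b = (TC.norm T).b - 1 ∧ S.c = (TC.norm T).c ∧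
    TC.Valid S ∧ KnuthEq (TC.word S) (TC.word T)

/-- Iterated `ℰ`. -/
noncomputable def EopIter : ℕ → TwoCol → TwoCol
  | 0, T => T
  | k + 1, T => Eop (EopIter k T)

/-- The starred left column `T^{L*} = (ℱT)^L` (used when `𝔯_T = 1`). -/
noncomputable def Lstar (T : TwoCol) : List ℕ := (Fop T).L

/-- The starred right column `T^{R*} = (ℱT)^R`. -/
noncomputable def Rstar (T : TwoCol) : List ℕ := (Fop T).R

/-- `^L T`: the left column of `ℰ^a T` (resp. `ℰ^{a-1} T` when `𝔯_T = 1`). -/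
noncomputable def Lup (T : TwoCol) : List ℕ := (EopIter (T.a - resid T) T).L

/-- `^R T`: the right column of `ℰ^a T` (resp. `ℰ^{a-1} T` when `𝔯_T = 1`). -/
noncomputable def Rup (T : TwoCol) : List ℕ := (EopIter (T.a - resid T) T).R

/-- Admissibility `T ≺ S` (Definition 2.3(1)) for
`(T, S) ∈ 𝐓(a) × 𝐓(a')` with `a = T.a ≥ a' = S.a`:
(i) `ht(T^R) ≤ ht(S^L) - a' + 2𝔯_T 𝔯_S`;
(ii) `T^R(i) ≤ {}^L S(i)` if `𝔯_T 𝔯_S = 0` and `T^{R*}(i) ≤ {}^L S(i)` if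
`𝔯_T 𝔯_S = 1`;
(iii) `{}^R T(i+a-a') ≤ S^L(i)` if `𝔯_T 𝔯_S = 0` and
`{}^R T(i+a-a') ≤ S^{L*}(i)` if `𝔯_T 𝔯_S = 1`, for all applicable `i ≥ 1`
(entries counted from the bottom). -/
noncomputable def Adm (T S : TwoCol) : Prop :=
  S.a ≤ T.a ∧
  T.R.length + S.a ≤ S.L.length + 2 * resid T * resid S ∧
  (resid T * resid S = 0 →
    ∀ i, 1 ≤ i → i ≤ T.R.length → i ≤ (Lup S).length →
      ent T.R i ≤ ent (Lup S) i) ∧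
  (resid T * resid S = 1 →
    ∀ i, 1 ≤ i → i ≤ (Rstar T).length → i ≤ (Lup S).length →
      ent (Rstar T) i ≤ ent (Lup S) i) ∧
  (resid T * resid S = 0 →
    ∀ i, 1 ≤ i → i + T.a - S.a ≤ (Rup T).length → i ≤ S.L.length →
      ent (Rup T) (i + T.a - S.a) ≤ ent S.L i) ∧
  (resid T * resid S = 1 →
    ∀ i, 1 ≤ i → i + T.a - S.a ≤ (Rup T).length → i ≤ (Lstar S).length →
      ent (Rup T) (i + T.a - S.a) ≤ ent (Lstar S) i)

/-- Admissibility `T ≺ S` for `(T, S) ∈ 𝐓(a) × 𝐓^{sp}` with `S` a single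
column (Remark 2.4(2)): here `a' = 𝔯_S` is the parity of `ht(S)`,
`S^L = {}^L S = S`, and `S^{L*}` is `S` with an arbitrarily large extra entry
appended at the bottom. -/
noncomputable def AdmSpin (T : TwoCol) (S : List ℕ) : Prop :=
  S.length % 2 ≤ T.a ∧
  T.R.length + S.length % 2 ≤ S.length + 2 * resid T * (S.length % 2) ∧
  (resid T * (S.length % 2) = 0 →
    ∀ i, 1 ≤ i → i ≤ T.R.length → i ≤ S.length → ent T.R i ≤ ent S i) ∧
  (resid T * (S.length % 2) = 1 →
    ∀ i, 1 ≤ i → i ≤ (Rstar T).length → i ≤ S.length →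
      ent (Rstar T) i ≤ ent S i) ∧
  (resid T * (S.length % 2) = 0 →
    ∀ i, 1 ≤ i → i + T.a - S.length % 2 ≤ (Rup T).length → i ≤ S.length →
      ent (Rup T) (i + T.a - S.length % 2) ≤ ent S i) ∧
  (resid T * (S.length % 2) = 1 →
    ∀ i, 2 ≤ i → i + T.a - S.length % 2 ≤ (Rup T).length →
      i - 1 ≤ S.length →
      ent (Rup T) (i + T.a - S.length % 2) ≤ ent S (i - 1))

/-- Membership in `𝐓(a)`: a semistandard filling of some `λ(a,b,c)` with
`b, c` even and `𝔯 ≤ 1`. -/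
def InTa (a : ℕ) (T : TwoCol) : Prop :=
  T.a = a ∧ TC.Valid T ∧ 2 ∣ T.b ∧ 2 ∣ T.c ∧ resid T ≤ 1

/-- Membership in `𝐓^{sp+}`: a strictly increasing column of even height with
positive entries. -/
def InSpPlus (S : List ℕ) : Prop :=
  S.Chain' (· < ·) ∧ (∀ x ∈ S, 0 < x) ∧ 2 ∣ S.length

/-- Membership of `𝐓 = (T_l, …, T_1, T_0)` in the spinor model `𝐓(μ, n)` of
type `D` in the case `n - 2μ'_1 ≥ 0` : writing `n = 2l + r` with `r ∈ {0,1}`,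
`Ts = [T_l, …, T_1]` is a list of `l` two-column tableaux with
`T_i ∈ 𝐓(μ_{l-i+1})` (so tails of heights `μ_1, μ_2, …` from the left), `T_0`
is a spin column in `𝐓^{sp+}` if `n` is odd (and absent otherwise), and
adjacent components are admissible: `T_{i+1} ≺ T_i`. -/
noncomputable def InModel (mu : List ℕ) (n : ℕ) (Ts : List TwoCol)
    (T0 : List ℕ) : Prop :=
  Ts.length = n / 2 ∧
  (∀ j < Ts.length, InTa (mu.getD j 0) (Ts.getD j default)) ∧
  (∀ j, j + 1 < Ts.length → Adm (Ts.getD j default) (Ts.getD (j + 1) default)) ∧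
  (n % 2 = 1 →
    InSpPlus T0 ∧ ∀ j, j + 1 = Ts.length → AdmSpin (Ts.getD j default) T0) ∧
  (n % 2 = 0 → T0 = [])

/-- The concatenated column reading word `w(T_0)w(T_1)⋯w(T_l)` of an element
of the spinor model. -/
def modelWord (Ts : List TwoCol) (T0 : List ℕ) : List ℕ :=
  T0 ++ (Ts.reverse.map TC.word).flatten

/-- `𝐓` is an `𝔩`-highest weight element (`ẽ_i 𝐓 = 0` for all `i ≠ 0`):
equivalently, its reading word is Knuth equivalent to `H_η` for some
partition `η`. -/
def IsLHighestModel (Ts : List TwoCol) (T0 : List ℕ) : Prop :=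
  ∃ eta, IsPartition eta ∧ insertWord (modelWord Ts T0) [] = Hcols eta

/-- Condition (H1) of Definition 3.3 for a single component `T`:
`T^R = (1, 2, …, b+c-1, T^R(1))` and
`T^L = (1, 2, …, c)` above the line, with arbitrary tail. -/
def CondH1 (T : TwoCol) : Prop :=
  (∀ m, m + 1 < T.R.length → T.R.getD m 0 = m + 1) ∧
  (∀ m, m < T.c → T.L.getD m 0 = m + 1)

/-- Condition (H2) of Definition 3.3 for the component of index `j` in
`Ts = [T_l, …, T_1]` (so the right neighbour `T_{i-1}` is at index `j+1`, and
for the rightmost component the convention `c_0 = ∞`, `𝔯_0 = 0` applies). -/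
def CondH2 (Ts : List TwoCol) (j : ℕ) : Prop :=
  (resid (Ts.getD j default) = 0 →
    ent (Ts.getD j default).R 1 = (Ts.getD j default).b + (Ts.getD j default).c) ∧
  (resid (Ts.getD j default) = 1 →
    ent (Ts.getD j default).L (Ts.getD j default).a = (Ts.getD j default).c + 1 ∧
    (j + 1 = Ts.length →
      ent (Ts.getD j default).R 1 = (Ts.getD j default).b + (Ts.getD j default).c) ∧
    (j + 1 < Ts.length →
      ent (Ts.getD j default).R 1 = (Ts.getD j default).b + (Ts.getD j default).c ∨
      (Ts.getD (j + 1) default).c + 1 + resid (Ts.getD (j + 1) default) ≤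
        ent (Ts.getD j default).R 1))

/-- `𝐓 ∈ 𝐇°(μ, n)` (Definition 3.3, case `n - 2μ'_1 ≥ 0`): conditions (H0),
(H1) and (H2). -/
def InHcirc (Ts : List TwoCol) (T0 : List ℕ) : Prop :=
  (∀ k, k < T0.length → T0.getD k 0 = k + 1) ∧
  ∀ j < Ts.length, CondH1 (Ts.getD j default) ∧ CondH2 Ts j

end LRPaper

/-!
Write `x = T^R_{i+1}(1)` and `y = T^L_i(a_i) ≥ c_i + 1`. If `𝔯_i 𝔯_{i+1} = 1`, then (H2) gives
`y = c_i + 1`, while `x` is either `b_{i+1} + c_{i+1}`, which is even, or at least `c_i + 2`.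
If `𝔯_i 𝔯_{i+1} = 0`, the height condition of `T_{i+1} ≺ T_i` gives `b_{i+1} + c_{i+1} ≤ c_i`,
which settles the case `𝔯_{i+1} = 0` by (H2)(i). When `𝔯_{i+1} = 1` and `𝔯_i = 0`, admissibility
gives `x ≤ {}^L T_i(1)`, and `{}^L T_i = (1, …, c_i)`: by (H1) and `𝔯_i = 0`, `T_i` has right
column `1, …, b+c` and left column `1, …, c` followed by letters `> b+c`, and each application of
`ℰ` moves the top tail letter to the bottom of the right column. That step is forced, because a
semistandard filling of a given shape is recovered from the insertion tableau
`[1, …, b+c, tail; 1, …, c]` of its word.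
-/

namespace List

variable {l : List ℕ}

theorem Pairwise.getElem_add_sub_le (hl : l.Pairwise (· < ·)) {i j : ℕ} (hij : i ≤ j)
    (hj : j < l.length) : l[i] + (j - i) ≤ l[j] := by
  induction j, hij using Nat.le_induction with
  | base => simp
  | succ j hij ih =>
    have := pairwise_iff_getElem.mp hl j (j + 1) (by omega) hj (by omega)
    have := ih (by omega)
    omega

theorem Pairwise.add_one_le_getElem (hl : l.Pairwise (· < ·)) (hpos : ∀ x ∈ l, 0 < x)
    {i : ℕ} (hi : i < l.length) : i + 1 ≤ l[i] := by
  have := hl.getElem_add_sub_le (Nat.zero_le i) hi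
  have := hpos _ (getElem_mem (show 0 < l.length by omega))
  omega

theorem Pairwise.lt_of_mem_drop (hl : l.Pairwise (· < ·)) (hpos : ∀ x ∈ l, 0 < x) {c z : ℕ}
    (hz : z ∈ l.drop c) : c < z := by
  obtain ⟨i, hi, rfl⟩ := mem_iff_getElem.mp hz
  rw [getElem_drop]
  have := hl.add_one_le_getElem hpos (i := c + i) (by rw [length_drop] at hi; omega)
  omega

theorem Pairwise.countP_le_eq_countP_take (hl : l.Pairwise (· < ·)) (hpos : ∀ x ∈ l, 0 < x)
    (c : ℕ) : l.countP (· ≤ c) = (l.take c).countP (· ≤ c) := by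
  have hdrop : (l.drop c).countP (· ≤ c) = 0 :=
    countP_eq_zero.mpr fun z hz => by simpa using hl.lt_of_mem_drop hpos hz
  conv_lhs => rw [← take_append_drop c l]
  rw [countP_append, hdrop, add_zero]

theorem Pairwise.countP_le_le (hl : l.Pairwise (· < ·)) (hpos : ∀ x ∈ l, 0 < x) (c : ℕ) :
    l.countP (· ≤ c) ≤ c := by
  rw [hl.countP_le_eq_countP_take hpos]
  exact countP_le_length.trans (length_take_le c l)

theorem Pairwise.take_eq_range'_of_countP (hl : l.Pairwise (· < ·)) (hpos : ∀ x ∈ l, 0 < x)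
    {c : ℕ} (hc : l.countP (· ≤ c) = c) : l.take c = range' 1 c := by
  rw [hl.countP_le_eq_countP_take hpos] at hc
  have hlen : (l.take c).length = c :=
    le_antisymm (length_take_le c l) (hc.symm.le.trans countP_le_length)
  have hle : ∀ x ∈ l.take c, x ≤ c := by
    simpa using countP_eq_length.mp (hc.trans hlen.symm)
  rw [length_take] at hlen
  refine ext_getElem (by simp; omega) fun i hi _ => ?_
  rw [length_take] at hi
  have hlast := hle _ (getElem_mem (show c - 1 < (l.take c).length by simp; omega))
  rw [getElem_take] at hlast
  rw [getElem_take, getElem_range']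
  have := hl.add_one_le_getElem hpos (i := i) (by omega)
  have := hl.getElem_add_sub_le (i := i) (j := c - 1) (by omega) (by omega)
  omega

theorem countP_le_range'_one {c n : ℕ} (h : c ≤ n) : (range' 1 n).countP (· ≤ c) = c := by
  obtain ⟨d, rfl⟩ := Nat.exists_eq_add_of_le h
  rw [← range'_append_1, countP_append, countP_eq_length.mpr, countP_eq_zero.mpr] <;>
    simp +contextual <;> omega

end List

namespace LRPaper

open List

theorem colInsertCol_perm (x : ℕ) (col : List ℕ) :
    ((colInsertCol x col).2.toList ++ (colInsertCol x col).1).Perm (x :: col) := by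
  induction col with
  | nil => simp [colInsertCol]
  | cons y ys ih =>
    by_cases hxy : x ≤ y
    · simpa [colInsertCol, hxy] using Perm.swap x y ys
    · rcases h : colInsertCol x ys with ⟨col', _ | z⟩ <;>
        simp only [h, Option.toList_none, Option.toList_some, nil_append,
          singleton_append] at ih <;>
        simp only [colInsertCol, hxy, if_false, h, Option.toList_none, Option.toList_some,
          nil_append, singleton_append]
      · exact (ih.cons y).trans (Perm.swap x y ys)
      · exact ((Perm.swap y z col').trans (ih.cons y)).trans (Perm.swap x y ys)

theorem colInsert_perm (x : ℕ) (Cs : List (List ℕ)) :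
    (colInsert x Cs).flatten.Perm (x :: Cs.flatten) := by
  induction Cs generalizing x with
  | nil => simp [colInsert]
  | cons C rest ih =>
    have h := colInsertCol_perm x C
    rcases hC : colInsertCol x C with ⟨C', _ | y⟩ <;>
      simp only [hC, Option.toList_none, Option.toList_some, nil_append,
        singleton_append] at h <;>
      simp only [colInsert, hC, flatten_cons]
    · simpa using h.append_right rest.flatten
    · exact ((ih y).append_left C').trans (perm_middle.trans (by simpa using h.append_right _))

theorem insertWord_perm (w : List ℕ) (Cs : List (List ℕ)) :
    (insertWord w Cs).flatten.Perm (w ++ Cs.flatten) := by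
  induction w generalizing Cs with
  | nil => simp [insertWord]
  | cons x w ih =>
    exact (ih _).trans (((colInsert_perm x Cs).append_left w).trans perm_middle)

theorem insertWord_append (u v : List ℕ) (Cs : List (List ℕ)) :
    insertWord (u ++ v) Cs = insertWord v (insertWord u Cs) :=
  foldl_append

theorem colInsertCol_of_mem {x : ℕ} {col : List ℕ} (hcol : col.Pairwise (· < ·))
    (hx : x ∈ col) : colInsertCol x col = (col, some x) := by
  induction col with
  | nil => simp at hx
  | cons y ys ih =>
    rw [pairwise_cons] at hcol
    rcases mem_cons.mp hx with rfl | hx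
    · simp [colInsertCol]
    · have hxy : ¬ x ≤ y := by have := hcol.1 x hx; omega
      simp [colInsertCol, hxy, ih hcol.2 hx]

theorem colInsertCol_of_forall_lt {x : ℕ} {col : List ℕ} (h : ∀ z ∈ col, z < x) :
    colInsertCol x col = (col ++ [x], none) := by
  induction col with
  | nil => simp [colInsertCol]
  | cons y ys ih =>
    have hxy : ¬ x ≤ y := by have := h y mem_cons_self; omega
    simp [colInsertCol, hxy, ih fun z hz => h z (mem_cons_of_mem y hz)]

theorem exists_colInsertCol_eq_some {x : ℕ} {col : List ℕ} (h : ∃ z ∈ col, x ≤ z) :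
    ∃ col' y, colInsertCol x col = (col', some y) ∧ x ≤ y := by
  induction col with
  | nil => simp at h
  | cons y ys ih =>
    by_cases hxy : x ≤ y
    · exact ⟨x :: ys, y, by simp [colInsertCol, hxy], hxy⟩
    · obtain ⟨z, hz, hxz⟩ := h
      have hz : z ∈ ys := (mem_cons.mp hz).resolve_left (by omega)
      obtain ⟨col', y', hy', hxy'⟩ := ih ⟨z, hz, hxz⟩
      exact ⟨y :: col', y', by simp [colInsertCol, hxy, hy'], hxy'⟩

theorem length_le_length_colInsertCol (x : ℕ) (col : List ℕ) :
    col.length ≤ (colInsertCol x col).1.length := by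
  induction col with
  | nil => simp [colInsertCol]
  | cons y ys ih =>
    by_cases hxy : x ≤ y
    · simp [colInsertCol, hxy]
    · simpa [colInsertCol, hxy] using ih

theorem length_getD_le_colInsert (x : ℕ) (Cs : List (List ℕ)) (i : ℕ) :
    (Cs.getD i []).length ≤ ((colInsert x Cs).getD i []).length := by
  induction Cs generalizing x i with
  | nil => simp
  | cons C rest ih =>
    have hC := length_le_length_colInsertCol x C
    rcases h : colInsertCol x C with ⟨C', _ | y⟩ <;> rw [h] at hC <;> rcases i with _ | i
    · simpa [colInsert, h] using hC
    · simp [colInsert, h]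
    · simpa [colInsert, h] using hC
    · simpa [colInsert, h] using ih y i

theorem length_getD_le_insertWord (w : List ℕ) (Cs : List (List ℕ)) (i : ℕ) :
    (Cs.getD i []).length ≤ ((insertWord w Cs).getD i []).length := by
  induction w generalizing Cs with
  | nil => simp [insertWord]
  | cons x w ih => exact (length_getD_le_colInsert x Cs i).trans (ih _)

theorem insertWord_cons_of_pairwise {A v : List ℕ} (rest : List (List ℕ))
    (h : (A ++ v).Pairwise (· < ·)) : insertWord v (A :: rest) = (A ++ v) :: rest := by
  induction v generalizing A with
  | nil => simp [insertWord]
  | cons x v ih =>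
    have hlt : ∀ z ∈ A, z < x := fun z hz => (pairwise_append.mp h).2.2 z hz x mem_cons_self
    change insertWord v (colInsert x (A :: rest)) = _
    rw [colInsert, colInsertCol_of_forall_lt hlt]
    simpa using ih (A := A ++ [x]) (by simpa using h)

theorem insertWord_of_pairwise {R : List ℕ} (hR : R.Pairwise (· < ·)) (hne : R ≠ []) :
    insertWord R [] = [R] := by
  obtain ⟨r, R, rfl⟩ := exists_cons_of_ne_nil hne
  exact insertWord_cons_of_pairwise (A := [r]) [] hR

theorem insertWord_of_forall_mem {R B v : List ℕ} (hR : R.Pairwise (· < ·))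
    (hv : ∀ x ∈ v, x ∈ R) (hBv : (B ++ v).Pairwise (· < ·)) :
    insertWord v [R, B] = [R, B ++ v] := by
  induction v generalizing B with
  | nil => simp [insertWord]
  | cons x v ih =>
    have hlt : ∀ z ∈ B, z < x := fun z hz => (pairwise_append.mp hBv).2.2 z hz x mem_cons_self
    change insertWord v (colInsert x [R, B]) = _
    simp only [colInsert, colInsertCol_of_mem hR (hv x mem_cons_self),
      colInsertCol_of_forall_lt hlt]
    simpa using ih (B := B ++ [x]) (fun y hy => hv y (mem_cons_of_mem x hy)) (by simpa using hBv)

theorem insertWord_range' {R : List ℕ} {c : ℕ} (hc : 1 ≤ c) (hR : R.Pairwise (· < ·))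
    (hRc : ∀ j ∈ range' 1 c, j ∈ R) : insertWord (range' 1 c) [R] = [R, range' 1 c] := by
  obtain ⟨c, rfl⟩ := Nat.exists_eq_add_of_le' hc
  have h1 : 1 ∈ R := hRc 1 (by simp)
  rw [range'_succ] at hRc ⊢
  change insertWord _ (colInsert 1 [R]) = _
  simp only [colInsert, colInsertCol_of_mem hR h1]
  exact insertWord_of_forall_mem hR (fun x hx => hRc x (mem_cons_of_mem 1 hx))
    (by simp [pairwise_lt_range']; omega)

theorem insertWord_twoCol {R lam : List ℕ} {c : ℕ} (hc : 1 ≤ c)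
    (hRlam : (R ++ lam).Pairwise (· < ·)) (hRc : ∀ j ∈ range' 1 c, j ∈ R) :
    insertWord (R ++ (range' 1 c ++ lam)) [] = [R ++ lam, range' 1 c] := by
  have hR := hRlam.sublist (sublist_append_left R lam)
  have hne : R ≠ [] := ne_nil_of_mem (hRc 1 (by simp; omega))
  rw [insertWord_append, insertWord_of_pairwise hR hne, insertWord_append,
    insertWord_range' hc hR hRc, insertWord_cons_of_pairwise _ hRlam]

/-- Otherwise the letter `l` would bump a letter `> c` into the second column `1, …, c`,
which can never shrink again. -/
theorem forall_lt_of_insertWord {R lam M : List ℕ} {c l : ℕ} (hc : 1 ≤ c)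
    (hR : R.Pairwise (· < ·)) (hRc : ∀ j ∈ range' 1 c, j ∈ R) (hl : c < l)
    (hins : insertWord (R ++ (range' 1 c ++ l :: lam)) [] = [M, range' 1 c]) :
    ∀ z ∈ R, z < l := by
  by_contra! hz
  obtain ⟨R', y, hbump, hly⟩ := exists_colInsertCol_eq_some hz
  have hne : R ≠ [] := ne_nil_of_mem (hRc 1 (by simp; omega))
  have hstep : colInsert l [R, range' 1 c] = [R', range' 1 c ++ [y]] := by
    simp [colInsert, hbump,
      colInsertCol_of_forall_lt (x := y) (col := range' 1 c) fun z hz => by simp at hz; omega]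
  rw [insertWord_append, insertWord_of_pairwise hR hne, insertWord_append,
    insertWord_range' hc hR hRc] at hins
  have hgrow := length_getD_le_insertWord lam [R', range' 1 c ++ [y]] 1
  rw [← hstep, show insertWord lam (colInsert l [R, range' 1 c]) =
    insertWord (l :: lam) [R, range' 1 c] from rfl, hins] at hgrow
  simp [hstep] at hgrow

theorem append_eq_of_insertWord {R lam M : List ℕ} {c : ℕ} (hc : 1 ≤ c)
    (hR : R.Pairwise (· < ·)) (hlam : (range' 1 c ++ lam).Pairwise (· < ·))
    (hRc : ∀ j ∈ range' 1 c, j ∈ R)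
    (hins : insertWord (R ++ (range' 1 c ++ lam)) [] = [M, range' 1 c]) : R ++ lam = M := by
  have hRlam : (R ++ lam).Pairwise (· < ·) := by
    rcases lam with _ | ⟨l, lam⟩
    · simpa using hR
    obtain ⟨-, hlam, hclam⟩ := pairwise_append.mp hlam
    have hRl := forall_lt_of_insertWord hc hR hRc (hclam c (by simp; omega) l mem_cons_self) hins
    refine pairwise_append.mpr ⟨hR, hlam, fun z hz w hw => ?_⟩
    rcases mem_cons.mp hw with rfl | hw
    · exact hRl z hz
    · exact (hRl z hz).trans ((pairwise_cons.mp hlam).1 w hw)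
  simpa using (insertWord_twoCol hc hRlam hRc).symm.trans hins

theorem TC.Valid.pairwise_L {T : TwoCol} (hT : TC.Valid T) : T.L.Pairwise (· < ·) :=
  isChain_iff_pairwise.mp hT.2.2.1

theorem TC.Valid.pairwise_R {T : TwoCol} (hT : TC.Valid T) : T.R.Pairwise (· < ·) :=
  isChain_iff_pairwise.mp hT.2.2.2.1

theorem TC.Valid.c_add_one_le_ent_L {S : TwoCol} (hS : TC.Valid S) (ha : 1 ≤ S.a) :
    S.c + 1 ≤ ent S.L S.a := by
  have hL := hS.pairwise_L
  obtain ⟨hlen, -, -, -, hpos, -, -⟩ := hS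
  rw [ent, hlen, show S.a + S.c - S.a = S.c by omega, getD_eq_getElem _ _ (by omega)]
  exact hL.add_one_le_getElem hpos _

theorem Eop_spec {T S : TwoCol}
    (hS : S.a = (TC.norm T).a - 1 ∧ S.b = (TC.norm T).b + 1 ∧ S.c = (TC.norm T).c ∧
      TC.Valid S ∧ KnuthEq (TC.word S) (TC.word T)) :
    (Eop T).a = (TC.norm T).a - 1 ∧ (Eop T).b = (TC.norm T).b + 1 ∧ (Eop T).c = (TC.norm T).c ∧
      TC.Valid (Eop T) ∧ KnuthEq (TC.word (Eop T)) (TC.word T) :=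
  Classical.epsilon_spec (p := fun S => S.a = (TC.norm T).a - 1 ∧ S.b = (TC.norm T).b + 1 ∧
    S.c = (TC.norm T).c ∧ TC.Valid S ∧ KnuthEq (TC.word S) (TC.word T)) ⟨S, hS⟩

/-- The filling with right column `1, …, b+c` followed by the first `k` letters of `ts`, and left
column `1, …, c` followed by the remaining letters of `ts`; it is `ℰ^k` of the `(H1)`-shaped
filling `TC.hform b c ts 0` (`TC.EopIter_hform`). -/
def TC.hform (b c : ℕ) (ts : List ℕ) (k : ℕ) : TwoCol :=
  ⟨ts.length - k, b + k, c, range' 1 c ++ ts.drop k, range' 1 (b + c) ++ ts.take k⟩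

section HForm

variable {b c : ℕ} {ts : List ℕ}

theorem TC.valid_hform (hc : 1 ≤ c) (hts : (range' 1 (b + c) ++ ts).Pairwise (· < ·)) {k : ℕ}
    (hk : k ≤ ts.length) : TC.Valid (TC.hform b c ts k) := by
  have hpos : ∀ x ∈ range' 1 (b + c) ++ ts, 0 < x := by
    intro x hx
    rcases mem_append.mp hx with hx | hx
    · simp at hx; omega
    · have := (pairwise_append.mp hts).2.2 1 (by simp; omega) x hx; omega
  have hLsub : (range' 1 c ++ ts.drop k).Sublist (range' 1 (b + c) ++ ts) := by
    refine Sublist.append ?_ (drop_sublist k ts)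
    rw [Nat.add_comm b c, ← range'_append_1 (s := 1) (m := c) (n := b)]
    exact sublist_append_left _ _
  have hRsub : (range' 1 (b + c) ++ ts.take k).Sublist (range' 1 (b + c) ++ ts) :=
    (take_sublist k ts).append_left _
  have hR := hts.sublist hRsub
  have hRpos : ∀ x ∈ range' 1 (b + c) ++ ts.take k, 0 < x := fun x hx => hpos x (hRsub.subset hx)
  refine ⟨by simp [TC.hform]; omega, by simp [TC.hform]; omega,
    isChain_iff_pairwise.mpr (hts.sublist hLsub), isChain_iff_pairwise.mpr hR,
    fun x hx => hpos x (hLsub.subset hx), hRpos, fun i hi => ?_⟩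
  simp only [TC.hform] at hi ⊢
  rw [getD_append _ _ _ _ (by simp; omega), getD_eq_getElem _ _ (by simp; omega),
    getD_eq_getElem _ _ (by simp; omega), getElem_range']
  have := hR.add_one_le_getElem hRpos (i := b + k - 0 + i) (by simp; omega)
  omega

theorem TC.resid_hform (hts : (range' 1 (b + c) ++ ts).Pairwise (· < ·)) (k : ℕ) :
    resid (TC.hform b c ts k) = 0 := by
  refine Nat.findGreatest_eq_zero_iff.mpr fun m hm hmle hslide => ?_
  simp only [TC.hform] at hmle
  have h := hslide c (by simp [TC.hform]; omega)
  simp only [TC.hform] at h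
  have hsplit : ((range' 1 (b + c) ++ ts.take k) ++ ts.drop k).Pairwise (· < ·) := by
    rwa [append_assoc, take_append_drop]
  have hu : (range' 1 (b + c) ++ ts.take k).getD (b + k - m + c) 0 ∈
      range' 1 (b + c) ++ ts.take k := by
    rw [getD_eq_getElem _ _ (by simp; omega)]; exact getElem_mem _
  have hv : (ts.drop k).getD 0 0 ∈ ts.drop k := by
    rw [getD_eq_getElem _ _ (by simp; omega)]; exact getElem_mem _
  rw [getD_append_right _ _ _ _ (by simp), length_range', Nat.sub_self] at h
  have := (pairwise_append.mp hsplit).2.2 _ hu _ hv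
  omega

theorem TC.insertWord_word_hform (hc : 1 ≤ c)
    (hts : (range' 1 (b + c) ++ ts).Pairwise (· < ·)) (k : ℕ) :
    insertWord (TC.word (TC.hform b c ts k)) [] = [range' 1 (b + c) ++ ts, range' 1 c] := by
  have h := insertWord_twoCol (R := range' 1 (b + c) ++ ts.take k) (lam := ts.drop k) hc
    (by rwa [append_assoc, take_append_drop])
    (fun j hj => mem_append_left _ (by simp at hj ⊢; omega))
  simpa only [TC.word, TC.hform, append_assoc, take_append_drop] using h

/-- The word of `X` contains each of `1, …, c` twice, hence once in each column; this fixes the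
top `c` entries of both columns, and then the insertion tableau pins down the rest. -/
theorem TC.eq_hform_of_insertWord (hc : 1 ≤ c) (hts : (range' 1 (b + c) ++ ts).Pairwise (· < ·))
    {X : TwoCol} (hX : TC.Valid X) {k : ℕ} (hk : k ≤ ts.length) (ha : X.a = ts.length - k)
    (hb : X.b = b + k) (hcX : X.c = c)
    (hins : insertWord (TC.word X) [] = [range' 1 (b + c) ++ ts, range' 1 c]) :
    X = TC.hform b c ts k := by
  have hL := hX.pairwise_L
  have hR := hX.pairwise_R
  obtain ⟨hLlen, hRlen, -, -, hLpos, hRpos, -⟩ := hX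
  have hcount := (insertWord_perm (TC.word X) []).countP_eq (· ≤ c)
  have hts_gt : ∀ x ∈ ts, c < x := fun x hx =>
    (pairwise_append.mp hts).2.2 c (by simp; omega) x hx
  have hts0 : ts.countP (· ≤ c) = 0 :=
    countP_eq_zero.mpr fun x hx => by simpa using hts_gt x hx
  rw [hins] at hcount
  simp only [flatten_cons, flatten_nil, append_nil, TC.word, countP_append,
    countP_le_range'_one (Nat.le_add_left c b), countP_le_range'_one le_rfl, hts0] at hcount
  have hRc := hR.countP_le_le hRpos c
  have hLc := hL.countP_le_le hLpos c
  have hRtake := hR.take_eq_range'_of_countP hRpos (c := c) (by omega)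
  have hLtake := hL.take_eq_range'_of_countP hLpos (c := c) (by omega)
  have hLeq : X.L = range' 1 c ++ X.L.drop c := by rw [← hLtake, take_append_drop]
  have happ := append_eq_of_insertWord hc hR (by rw [← hLeq]; exact hL)
    (fun j hj => mem_of_mem_take (hRtake ▸ hj)) (by rw [← hLeq]; exact hins)
  rw [← take_append_drop k ts, ← append_assoc] at happ
  obtain ⟨hReq, hLdrop⟩ := append_inj happ (by simp; omega)
  rw [hLdrop] at hLeq
  cases X
  simp only [TC.hform, TwoCol.mk.injEq]
  exact ⟨ha, hb, hcX, hcX ▸ hLeq, hReq⟩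

theorem TC.Eop_hform (hc : 1 ≤ c) (hts : (range' 1 (b + c) ++ ts).Pairwise (· < ·)) {k : ℕ}
    (hk : k < ts.length) : Eop (TC.hform b c ts k) = TC.hform b c ts (k + 1) := by
  have hnorm : TC.norm (TC.hform b c ts k) = TC.hform b c ts k := by
    simp [TC.norm, TC.resid_hform hts]
  obtain ⟨ha, hb, hcE, hval, hknuth⟩ := Eop_spec (T := TC.hform b c ts k)
    (S := TC.hform b c ts (k + 1)) <| by
      refine ⟨?_, ?_, by rw [hnorm]; rfl, TC.valid_hform hc hts hk, ?_⟩
      · rw [hnorm]; simp [TC.hform]; omega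
      · rw [hnorm]; simp [TC.hform]; omega
      · rw [KnuthEq, TC.insertWord_word_hform hc hts, TC.insertWord_word_hform hc hts]
  rw [hnorm] at ha hb hcE
  refine TC.eq_hform_of_insertWord hc hts hval hk ?_ ?_ hcE ?_
  · rw [ha]; simp [TC.hform]; omega
  · rw [hb]; simp [TC.hform]; omega
  · rw [KnuthEq] at hknuth; rw [hknuth, TC.insertWord_word_hform hc hts]

theorem TC.EopIter_hform (hc : 1 ≤ c) (hts : (range' 1 (b + c) ++ ts).Pairwise (· < ·)) {k : ℕ}
    (hk : k ≤ ts.length) : EopIter k (TC.hform b c ts 0) = TC.hform b c ts k := by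
  induction k with
  | zero => rfl
  | succ k ih => rw [EopIter, ih (by omega), TC.Eop_hform hc hts (by omega)]

theorem TC.Lup_hform (hc : 1 ≤ c) (hts : (range' 1 (b + c) ++ ts).Pairwise (· < ·)) :
    Lup (TC.hform b c ts 0) = range' 1 c := by
  rw [Lup, TC.resid_hform hts,
    show (TC.hform b c ts 0).a - 0 = ts.length by simp [TC.hform],
    TC.EopIter_hform hc hts le_rfl]
  simp [TC.hform]

end HForm

section CondH1

variable {S : TwoCol}

theorem CondH1.R_eq_range' (hS : TC.Valid S) (hH1 : CondH1 S) (hR1 : ent S.R 1 = S.b + S.c) :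
    S.R = range' 1 (S.b + S.c) := by
  have hlen := hS.2.1
  refine ext_getElem (by simp [hlen]) fun i hi _ => ?_
  rw [getElem_range', ← getD_eq_getElem _ 0 hi]
  rcases lt_or_ge (i + 1) S.R.length with h | h
  · rw [hH1.1 i h]; omega
  · rw [ent, hlen] at hR1
    rw [show i = S.b + S.c - 1 by omega, hR1]; omega

theorem CondH1.L_eq (hS : TC.Valid S) (hH1 : CondH1 S) :
    S.L = range' 1 S.c ++ S.L.drop S.c := by
  have hlen := hS.1
  conv_lhs => rw [← take_append_drop S.c S.L]
  refine congrArg (· ++ _) (ext_getElem (by simp; omega) fun i hi _ => ?_)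
  rw [length_take] at hi
  rw [getElem_take, getElem_range', ← getD_eq_getElem _ 0, hH1.2 i (by omega)]
  omega

theorem CondH1.eq_hform (hS : TC.Valid S) (hH1 : CondH1 S) (hR1 : ent S.R 1 = S.b + S.c) :
    S = TC.hform S.b S.c (S.L.drop S.c) 0 := by
  have hR := hH1.R_eq_range' hS hR1
  have hL := hH1.L_eq hS
  have hlen := hS.1
  cases S
  simp only [TC.hform, TwoCol.mk.injEq]
  exact ⟨by simp at hlen ⊢; omega, rfl, trivial, by simpa using hL, by simpa using hR⟩

/-- For `b ≥ 1`, the first tail entry of `S^L` exceeds `b + c`, as otherwise the right column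
could be slid down by one position. -/
theorem CondH1.pairwise_of_resid_eq_zero (hS : TC.Valid S) (hH1 : CondH1 S)
    (hR1 : ent S.R 1 = S.b + S.c) (hres : resid S = 0) :
    (range' 1 (S.b + S.c) ++ S.L.drop S.c).Pairwise (· < ·) := by
  have hL := hS.pairwise_L
  have hR := hH1.R_eq_range' hS hR1
  have hLeq := hH1.L_eq hS
  obtain ⟨hLlen, -, -, -, hLpos, -, -⟩ := hS
  refine pairwise_append.mpr ⟨pairwise_lt_range', hL.sublist (drop_sublist _ _), ?_⟩
  intro x hx y hy
  rw [mem_range'_1] at hx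
  obtain ⟨m, hm, rfl⟩ := mem_iff_getElem.mp hy
  rw [length_drop] at hm
  rw [getElem_drop]
  have hmono := hL.getElem_add_sub_le (i := S.c) (j := S.c + m) (by omega) (by omega)
  suffices S.b + S.c < S.L[S.c] by omega
  rcases Nat.eq_zero_or_pos S.b with hb | hb
  · have := hL.add_one_le_getElem hLpos (i := S.c) (by omega)
    omega
  have hslide : ¬ SlideOK S 1 := fun h => by
    have : 1 ≤ resid S := Nat.le_findGreatest (by omega) h
    omega
  simp only [SlideOK, not_forall, not_le] at hslide
  obtain ⟨i, hi, hlt⟩ := hslide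
  rw [hR, getD_eq_getElem _ _ (by simp; omega), getElem_range'] at hlt
  rcases lt_or_ge i S.c with hic | hic
  · rw [hLeq, getD_append _ _ _ _ (by simpa using hic), getD_eq_getElem _ _ (by simpa using hic),
      getElem_range'] at hlt
    omega
  · rw [← getD_eq_getElem _ 0, show S.c = i by omega]
    omega

theorem CondH1.Lup_eq (hS : TC.Valid S) (hH1 : CondH1 S) (hR1 : ent S.R 1 = S.b + S.c)
    (hres : resid S = 0) (hc : 1 ≤ S.c) : Lup S = range' 1 S.c := by
  conv_lhs => rw [hH1.eq_hform hS hR1]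
  exact TC.Lup_hform hc (hH1.pairwise_of_resid_eq_zero hS hR1 hres)

end CondH1

theorem ent_R_one_le_of_adm {T S : TwoCol} (hT : TC.Valid T) (hTr : resid T ≤ 1)
    (hTR : resid T = 0 → ent T.R 1 = T.b + T.c) (hS : TC.Valid S) (hSH1 : CondH1 S)
    (hSR : resid S = 0 → ent S.R 1 = S.b + S.c) (hadm : Adm T S)
    (h0 : resid T * resid S = 0) : ent T.R 1 ≤ S.c := by
  obtain ⟨-, hheight, hbelow, -⟩ := hadm
  have hbc : T.b + T.c ≤ S.c := by
    rw [hT.2.1, hS.1, mul_assoc, h0] at hheight; omega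
  rcases Nat.le_one_iff_eq_zero_or_eq_one.mp hTr with hT0 | hT1
  · exact (hTR hT0).trans_le hbc
  have hS0 : resid S = 0 := by simpa [hT1] using h0
  have hTb : resid T ≤ min T.a T.b := Nat.findGreatest_le _
  have hLup := hSH1.Lup_eq hS (hSR hS0) hS0 (by omega)
  have := hbelow h0 1 le_rfl (by rw [hT.2.1]; omega) (by simp [hLup]; omega)
  have hent : ent (range' 1 S.c) 1 = S.c := by
    rw [ent, length_range', getD_eq_getElem _ _ (by simp; omega), getElem_range']; omega
  rwa [hLup, hent] at this

theorem Hcirc_trichotomy_general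
    (n : ℕ) (mu : List ℕ)
    (Ts : List TwoCol) (T0 : List ℕ)
    (hmem : InModel mu n Ts T0) (hH : InHcirc Ts T0)
    (j : ℕ) (hj : j + 1 < Ts.length)
    (ha : 1 ≤ (Ts.getD (j + 1) default).a) :
    ent (Ts.getD j default).R 1 ≠
        ent (Ts.getD (j + 1) default).L (Ts.getD (j + 1) default).a ∧
    (ent (Ts.getD (j + 1) default).L (Ts.getD (j + 1) default).a <
        ent (Ts.getD j default).R 1 →
      resid (Ts.getD (j + 1) default) * resid (Ts.getD j default) = 1) ∧
    (resid (Ts.getD (j + 1) default) * resid (Ts.getD j default) = 0 →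
      ent (Ts.getD j default).R 1 <
        ent (Ts.getD (j + 1) default).L (Ts.getD (j + 1) default).a) := by
  obtain ⟨-, hInTa, hAdm, -, -⟩ := hmem
  obtain ⟨-, hT, hTb, hTc, hTr⟩ := hInTa j (by omega)
  obtain ⟨-, hS, -, hSc, hSr⟩ := hInTa (j + 1) hj
  obtain ⟨-, hT2⟩ := hH.2 j (by omega)
  obtain ⟨hSH1, hS2⟩ := hH.2 (j + 1) hj
  have hTS := hAdm j hj
  set T := Ts.getD j default
  set S := Ts.getD (j + 1) default
  have hTx : resid T = 1 → ent T.R 1 = T.b + T.c ∨ S.c + 1 + resid S ≤ ent T.R 1 :=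
    fun h => (hT2.2 h).2.2 hj
  have hSy : resid S = 1 → ent S.L S.a = S.c + 1 := fun h => (hS2.2 h).1
  have hlt : resid S * resid T = 0 → ent T.R 1 < ent S.L S.a := fun h0 =>
    (ent_R_one_le_of_adm hT hTr hT2.1 hS hSH1 hS2.1 hTS (by rwa [mul_comm])).trans_lt
      (hS.c_add_one_le_ent_L ha)
  have hne : resid S * resid T = 1 → ent T.R 1 ≠ ent S.L S.a := by
    intro h1
    have hS1 : resid S = 1 := Nat.eq_one_of_mul_eq_one_right h1
    rw [hSy hS1]
    rcases hTx (Nat.eq_one_of_mul_eq_one_left h1) with hx | hx <;> omega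
  have hprod : resid S * resid T = 0 ∨ resid S * resid T = 1 := by
    rcases Nat.le_one_iff_eq_zero_or_eq_one.mp hSr with h | h <;> rw [h] <;> omega
  refine ⟨?_, fun hgt => hprod.resolve_left fun h0 => (hlt h0).not_gt hgt, hlt⟩
  rcases hprod with h0 | h1
  · exact (hlt h0).ne
  · exact hne h1

/-- **Lemma 3.4.** Let `μ ∈ 𝒫(O_n)` with `n - 2μ'_1 ≥ 0` and
`𝐓 = (T_l, …, T_1, T_0) ∈ 𝐇°(μ, n)`.  For each adjacent pair
`(T_{i+1}, T_i)` (with `a_i ≥ 1`), the entries `T^R_{i+1}(1)` and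
`T^L_i(a_i)` are never equal, so exactly one of `T^R_{i+1}(1) < T^L_i(a_i)`
and `T^R_{i+1}(1) > T^L_i(a_i)` holds.  Moreover `T^R_{i+1}(1) > T^L_i(a_i)`
implies `𝔯_i 𝔯_{i+1} = 1`, and `𝔯_i 𝔯_{i+1} = 0` implies
`T^R_{i+1}(1) < T^L_i(a_i)`. -/
theorem Hcirc_trichotomy
    (n : ℕ) (mu : List ℕ) (hmu : IsPartition mu) (hpos : 2 * mu.length ≤ n)
    (Ts : List TwoCol) (T0 : List ℕ)
    (hmem : InModel mu n Ts T0) (hH : InHcirc Ts T0)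
    (j : ℕ) (hj : j + 1 < Ts.length)
    (ha : 1 ≤ (Ts.getD (j + 1) default).a) :
    ent (Ts.getD j default).R 1 ≠
        ent (Ts.getD (j + 1) default).L (Ts.getD (j + 1) default).a ∧
    (ent (Ts.getD (j + 1) default).L (Ts.getD (j + 1) default).a <
        ent (Ts.getD j default).R 1 →
      resid (Ts.getD (j + 1) default) * resid (Ts.getD j default) = 1) ∧
    (resid (Ts.getD (j + 1) default) * resid (Ts.getD j default) = 0 →
      ent (Ts.getD j default).R 1 <
        ent (Ts.getD (j + 1) default).L (Ts.getD (j + 1) default).a) :=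
  Hcirc_trichotomy_general n mu Ts T0 hmem hH j hj ha

end LRPaper
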